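/- Let z = (L+K)^{-1}Ks. Then the internal conflict C = Σ_i k_i (z_i - s_i)^2 equals s^T K(L+K)^{-1} L K^{-1} L (L+K)^{-1} K s, which also equals z^T L K^{-1} L z. -/

import Mathlib

open Matrix BigOperators

/-!
With `M = L + K`, the equilibrium equation `M z = K s` reads `L z = K (s - z)`, so the conflict
`∑ kᵢ (zᵢ - sᵢ)²` is `(L z)ᵀ K⁻¹ (L z)`; symmetry of `L` turns this into `zᵀ L K⁻¹ L z`, and
symmetry of `M` together with `z = M⁻¹ K s` into the sandwich form in `s`. The matrix `M` is
invertible because it is strictly diagonally dominant.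
-/

section QuadraticForm

variable {R m n : Type*} [CommSemiring R] [Fintype m] [Fintype n]

theorem dotProduct_transpose_mul_mul_mulVec (A : Matrix m m R) (B : Matrix m n R) (x : n → R) :
    x ⬝ᵥ (Bᵀ * A * B) *ᵥ x = (B *ᵥ x) ⬝ᵥ A *ᵥ (B *ᵥ x) := by
  rw [← mulVec_mulVec, ← mulVec_mulVec, dotProduct_mulVec, vecMul_transpose]

end QuadraticForm

section Laplacian

variable {ι : Type*} [Fintype ι] [DecidableEq ι]

def weightedLaplacian {R : Type*} [AddCommGroup R] (w : ι → ι → R) : Matrix ι ι R :=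
  of fun i j => if i = j then ∑ l, w i l else -w i j

theorem weightedLaplacian_transpose {R : Type*} [AddCommGroup R] {w : ι → ι → R}
    (hsymm : ∀ i j, w i j = w j i) : (weightedLaplacian w)ᵀ = weightedLaplacian w := by
  ext i j
  by_cases h : i = j
  · subst h; rfl
  · simp [weightedLaplacian, h, Ne.symm h, hsymm i j]

theorem det_weightedLaplacian_add_diagonal_ne_zero {w : ι → ι → ℝ} (hnonneg : ∀ i j, 0 ≤ w i j)
    {k : ι → ℝ} (hk : ∀ i, 0 < k i) : (weightedLaplacian w + diagonal k).det ≠ 0 := by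
  refine det_ne_zero_of_sum_row_lt_diag fun i => ?_
  have hoff : ∀ j ∈ Finset.univ.erase i,
      ‖(weightedLaplacian w + diagonal k) i j‖ = w i j := fun j hj => by
    simp [weightedLaplacian, Ne.symm (Finset.ne_of_mem_erase hj), abs_of_nonneg (hnonneg i j)]
  have hrow : 0 ≤ ∑ l, w i l := Finset.sum_nonneg fun l _ => hnonneg i l
  calc ∑ j ∈ Finset.univ.erase i, ‖(weightedLaplacian w + diagonal k) i j‖
      = ∑ j ∈ Finset.univ.erase i, w i j := Finset.sum_congr rfl hoff
    _ ≤ ∑ l, w i l := Finset.sum_le_univ_sum_of_nonneg (hnonneg i)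
    _ < ‖(weightedLaplacian w + diagonal k) i i‖ := by
      simp [weightedLaplacian, abs_of_pos (add_pos_of_nonneg_of_pos hrow (hk i)), hk i]

end Laplacian

theorem sum_mul_sub_sq_eq_dotProduct_diagonal_inv {R ι : Type*} [Field R] [Fintype ι]
    [DecidableEq ι] (L : Matrix ι ι R) {k : ι → R} (hk : ∀ i, k i ≠ 0) {s z : ι → R}
    (hz : (L + diagonal k) *ᵥ z = diagonal k *ᵥ s) :
    ∑ i, k i * (z i - s i) ^ 2 = (L *ᵥ z) ⬝ᵥ diagonal (fun i => (k i)⁻¹) *ᵥ (L *ᵥ z) := by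
  have hLz : ∀ i, (L *ᵥ z) i = k i * (s i - z i) := fun i => by
    have := congrFun hz i
    simp only [add_mulVec, Pi.add_apply, mulVec_diagonal] at this
    rw [mul_sub]; exact eq_sub_of_add_eq this
  simp only [dotProduct, mulVec_diagonal, hLz]
  refine Finset.sum_congr rfl fun i _ => ?_
  field_simp [hk i]
  ring

theorem stmt_13_general {n : ℕ}
    (w : Fin n → Fin n → ℝ)
    (hsymm : ∀ i j, w i j = w j i) (hnonneg : ∀ i j, 0 ≤ w i j)
    (L : Matrix (Fin n) (Fin n) ℝ)
    (hL : L = Matrix.of (fun i j => if i = j then ∑ l, w i l else -w i j))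
    (k : Fin n → ℝ) (hk : ∀ i, 0 < k i)
    (s z : Fin n → ℝ)
    (hz : z = (L + Matrix.diagonal k)⁻¹ *ᵥ (Matrix.diagonal k *ᵥ s)) :
    (∑ i, k i * (z i - s i) ^ 2 =
        s ⬝ᵥ (Matrix.diagonal k * (L + Matrix.diagonal k)⁻¹ * L *
          Matrix.diagonal (fun i => (k i)⁻¹) * L * (L + Matrix.diagonal k)⁻¹ *
          Matrix.diagonal k) *ᵥ s) ∧
      ∑ i, k i * (z i - s i) ^ 2 =
        z ⬝ᵥ (L * Matrix.diagonal (fun i => (k i)⁻¹) * L) *ᵥ z := by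
  replace hL : L = weightedLaplacian w := hL
  subst hL
  have hLt := weightedLaplacian_transpose hsymm
  have hM := (det_weightedLaplacian_add_diagonal_ne_zero hnonneg hk).isUnit
  set L := weightedLaplacian w
  set K := diagonal k
  set M := L + K
  have hKt : Kᵀ = K := diagonal_transpose k
  have hMt : Mᵀ = M := by rw [transpose_add, hLt, hKt]
  have hMz : M *ᵥ z = K *ᵥ s := by rw [hz, mulVec_mulVec, mul_nonsing_inv _ hM, one_mulVec]
  have hconflict := sum_mul_sub_sq_eq_dotProduct_diagonal_inv L (fun i => (hk i).ne') hMz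
  have hsecond : z ⬝ᵥ (L * diagonal (fun i => (k i)⁻¹) * L) *ᵥ z
      = (L *ᵥ z) ⬝ᵥ diagonal (fun i => (k i)⁻¹) *ᵥ (L *ᵥ z) := by
    simpa only [hLt] using dotProduct_transpose_mul_mul_mulVec (diagonal fun i => (k i)⁻¹) L z
  refine ⟨?_, hconflict.trans hsecond.symm⟩
  have hsandwich : K * M⁻¹ * L * diagonal (fun i => (k i)⁻¹) * L * M⁻¹ * K
      = (M⁻¹ * K)ᵀ * (L * diagonal (fun i => (k i)⁻¹) * L) * (M⁻¹ * K) := by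
    rw [transpose_mul, transpose_nonsing_inv, hMt, hKt]
    simp only [Matrix.mul_assoc]
  rw [hsandwich, dotProduct_transpose_mul_mul_mulVec, ← mulVec_mulVec, ← hz, hconflict, hsecond]

/-- The internal conflict `C = Σᵢ kᵢ (zᵢ - sᵢ)²` equals
`sᵀ K(L+K)⁻¹ L K⁻¹ L (L+K)⁻¹ K s`, which also equals `zᵀ L K⁻¹ L z`. -/
theorem stmt_13 {n : ℕ}
    (w : Fin n → Fin n → ℝ)
    (hsymm : ∀ i j, w i j = w j i) (hnonneg : ∀ i j, 0 ≤ w i j)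
    (hdiag : ∀ i, w i i = 0)
    (hconn : (SimpleGraph.fromRel fun i j => 0 < w i j).Connected)
    (L : Matrix (Fin n) (Fin n) ℝ)
    (hL : L = Matrix.of (fun i j => if i = j then ∑ l, w i l else -w i j))
    (k : Fin n → ℝ) (hk : ∀ i, 0 < k i)
    (s z : Fin n → ℝ)
    (hz : z = (L + Matrix.diagonal k)⁻¹ *ᵥ (Matrix.diagonal k *ᵥ s)) :
    (∑ i, k i * (z i - s i) ^ 2 =
        s ⬝ᵥ (Matrix.diagonal k * (L + Matrix.diagonal k)⁻¹ * L *
          Matrix.diagonal (fun i => (k i)⁻¹) * L * (L + Matrix.diagonal k)⁻¹ *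
          Matrix.diagonal k) *ᵥ s) ∧
      ∑ i, k i * (z i - s i) ^ 2 =
        z ⬝ᵥ (L * Matrix.diagonal (fun i => (k i)⁻¹) * L) *ᵥ z :=
  stmt_13_general w hsymm hnonneg L hL k hk s z hz
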